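/- For x ∈ (0, π), the Lobachevsky function Λ is differentiable at x with derivative Λ'(x) = −log(2 sin x). -/

import Mathlib

open Real Filter Set

/-! The integrand `log |2 sin s|` has only logarithmic singularities, at the zeros of the analytic
function `2 sin`, so it is integrable on every interval; away from those zeros it is continuous,
and the fundamental theorem of calculus gives the derivative. -/

noncomputable def Lob (x : ℝ) : ℝ := -∫ s in (0:ℝ)..x, Real.log |2 * Real.sin s|

theorem intervalIntegrable_log_abs_two_mul_sin (a b : ℝ) :
    IntervalIntegrable (fun s => log |2 * sin s|) MeasureTheory.volume a b :=
  (analyticOnNhd_const.mul analyticOnNhd_sin).meromorphicOn.intervalIntegrable_log_norm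

theorem hasDerivAt_Lob {x : ℝ} (hx : sin x ≠ 0) : HasDerivAt Lob (-log |2 * sin x|) x := by
  have hcont : ContinuousAt (fun s => log |2 * sin s|) x :=
    (continuous_const.mul continuous_sin).abs.continuousAt.log (by simpa using hx)
  have hmeas : StronglyMeasurableAtFilter (fun s => log |2 * sin s|) (nhds x) :=
    (by fun_prop : Measurable fun s => log |2 * sin s|).stronglyMeasurable.stronglyMeasurableAtFilter
  exact (intervalIntegral.integral_hasDerivAt_right
    (intervalIntegrable_log_abs_two_mul_sin 0 x) hmeas hcont).neg

/-- For `x ∈ (0, π)`, the Lobachevsky function is differentiable at `x` with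
derivative `−log(2 sin x)`. -/
theorem stmt_5 (x : ℝ) (hx0 : 0 < x) (hxpi : x < Real.pi) :
    HasDerivAt Lob (-Real.log (2 * Real.sin x)) x := by
  have hsin : 0 < sin x := sin_pos_of_pos_of_lt_pi hx0 hxpi
  simpa only [abs_of_pos (by positivity : 0 < 2 * sin x)] using hasDerivAt_Lob hsin.ne'
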